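/- arXiv:1111.0784 — 2 statements merged into one kernel-verified Lean document; each statement's English description precedes it below -/
import Mathlib

section
/- The set of geodesic words for the free group on {a,b,c,d} with respect to the 6-element generating set {a,b,c,d,r,s} where r = b a² b⁻¹ c⁻¹ and s = bd (closed under inverses) is not a star-free language. -/
/-!
A star-free language cannot tell long blocks of a single letter apart: for each letter `c` there
is an `N` such that membership of `u c^m w` does not depend on `m ≥ N`, and this property survives
all the star-free operations. The geodesic language fails it at `c = a`. The word `b a^(2k) d`
equals the shorter word `(rc)^k s`. On the other hand `b a^n d` is geodesic for odd `n`: the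
exponent sums of `a, b, c, d` force every word of length at most `n + 1` representing it to avoid
the letters `b, d`, and such words fix `0` in the action of the group on `ZMod 3` in which `a`
acts as `x ↦ -x`, `b` and `d` as `x ↦ x + 1` and `x ↦ x + 2`, and the other generators
trivially, while `b a^n d` sends `0` to `2`.
-/

/-- Star-free languages over an alphabet `A`: the closure of the finite
languages under concatenation, union, intersection, and complementation. -/
inductive StarFree {A : Type*} : Language A → Prop
  | finite (L : Language A) : L.Finite → StarFree L
  | concat (L₁ L₂ : Language A) : StarFree L₁ → StarFree L₂ → StarFree (L₁ * L₂)
  | union (L₁ L₂ : Language A) : StarFree L₁ → StarFree L₂ → StarFree (L₁ ⊔ L₂)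
  | inter (L₁ L₂ : Language A) : StarFree L₁ → StarFree L₂ → StarFree (L₁ ⊓ L₂)
  | compl (L : Language A) : StarFree L → StarFree Lᶜ

open FreeGroup in
/-- The relators of the presentation `⟨a,b,c,d,r,s ∣ ba²d = rcs, bd = s⟩`,
with generators indexed `a=0, b=1, c=2, d=3, r=4, s=5`. -/
def rels : Set (FreeGroup (Fin 6)) :=
  { (of 1 * of 0 * of 0 * of 3) * (of 4 * of 2 * of 5)⁻¹,
    (of 1 * of 3) * (of 5)⁻¹ }

/-- The group `G = ⟨a,b,c,d,r,s ∣ ba²d = rcs, bd = s⟩`. -/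
abbrev Gp : Type := PresentedGroup rels

/-- The element of the monoid `G` represented by a word over the alphabet `A`,
where `ev` sends each letter to the corresponding generator. -/
def evalWord {G A : Type*} [Monoid G] (ev : A → G) (w : List A) : G :=
  (w.map ev).prod

/-- A word is geodesic if no shorter word represents the same element. -/
def IsGeodesic {G A : Type*} [Monoid G] (ev : A → G) (w : List A) : Prop :=
  ∀ w' : List A, evalWord ev w' = evalWord ev w → w.length ≤ w'.length

/-- The inverse-closed alphabet on the six generators: `(i, true)` is the
generator `i` and `(i, false)` is its inverse. -/
def ev6 : Fin 6 × Bool → Gp :=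
  fun p => cond p.2 (PresentedGroup.of p.1) (PresentedGroup.of p.1)⁻¹

/-- The positive letter for generator `i`. -/
def gl (i : Fin 6) : Fin 6 × Bool := (i, true)

open List

theorem List.append_eq_append_replicate_append {A : Type*} {x y u w : List A} {c : A} {m : ℕ}
    (h : x ++ y = u ++ replicate m c ++ w) :
    (∃ t, u = x ++ t ∧ y = t ++ replicate m c ++ w) ∨
    (∃ i j, i + j = m ∧ x = u ++ replicate i c ∧ y = replicate j c ++ w) ∨
    (∃ t, w = t ++ y ∧ x = u ++ replicate m c ++ t) := by
  rw [append_assoc] at h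
  obtain ⟨t, hu, hy⟩ | ⟨t, hx, ht⟩ := append_eq_append_iff.1 h
  · exact Or.inl ⟨t, hu, by rw [hy, append_assoc]⟩
  obtain ⟨s, hc, hy⟩ | ⟨s, ht', hw⟩ := append_eq_append_iff.1 ht.symm
  · obtain ⟨hlen, ht'', hs⟩ := append_eq_replicate_iff.1 hc.symm
    exact Or.inr (Or.inl ⟨t.length, s.length, hlen, by rw [hx, ← ht''], by rw [hy, ← hs]⟩)
  · exact Or.inr (Or.inr ⟨s, hw, by rw [hx, ht', append_assoc]⟩)

namespace Language

variable {A : Type*}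

-- The eventual-period-one condition with `v` restricted to the single letter `c`.
def IsAperiodicAt (L : Language A) (c : A) : Prop :=
  ∃ N : ℕ, ∀ (u w : List A) (m n : ℕ), N ≤ m → N ≤ n →
    u ++ replicate m c ++ w ∈ L → u ++ replicate n c ++ w ∈ L

theorem isAperiodicAt_of_finite {L : Language A} (hL : L.Finite) (c : A) : L.IsAperiodicAt c := by
  obtain ⟨N, hN⟩ := (hL.image List.length).bddAbove
  refine ⟨N + 1, fun u w m n hm _ hmem => absurd (hN ⟨_, hmem, rfl⟩) ?_⟩
  simp only [length_append, length_replicate]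
  omega

theorem IsAperiodicAt.compl {L : Language A} {c : A} (h : L.IsAperiodicAt c) :
    Lᶜ.IsAperiodicAt c := by
  obtain ⟨N, hN⟩ := h
  exact ⟨N, fun u w m n hm hn hmem hmem' => hmem (hN u w n m hn hm hmem')⟩

theorem IsAperiodicAt.sup {L₁ L₂ : Language A} {c : A} (h₁ : L₁.IsAperiodicAt c)
    (h₂ : L₂.IsAperiodicAt c) : (L₁ ⊔ L₂).IsAperiodicAt c := by
  obtain ⟨N₁, hN₁⟩ := h₁
  obtain ⟨N₂, hN₂⟩ := h₂
  refine ⟨max N₁ N₂, fun u w m n hm hn => ?_⟩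
  rw [max_le_iff] at hm hn
  exact Or.imp (hN₁ u w m n hm.1 hn.1) (hN₂ u w m n hm.2 hn.2)

theorem IsAperiodicAt.inf {L₁ L₂ : Language A} {c : A} (h₁ : L₁.IsAperiodicAt c)
    (h₂ : L₂.IsAperiodicAt c) : (L₁ ⊓ L₂).IsAperiodicAt c := by
  obtain ⟨N₁, hN₁⟩ := h₁
  obtain ⟨N₂, hN₂⟩ := h₂
  refine ⟨max N₁ N₂, fun u w m n hm hn => ?_⟩
  rw [max_le_iff] at hm hn
  exact And.imp (hN₁ u w m n hm.1 hn.1) (hN₂ u w m n hm.2 hn.2)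

theorem mem_mul_of_replicate {L₁ L₂ : Language A} {u w : List A} {c : A} {i j : ℕ}
    (h₁ : u ++ replicate i c ∈ L₁) (h₂ : replicate j c ++ w ∈ L₂) :
    u ++ replicate (i + j) c ++ w ∈ L₁ * L₂ :=
  mem_mul.2 ⟨_, h₁, _, h₂, by simp only [replicate_add, append_assoc]⟩

theorem IsAperiodicAt.mul {L₁ L₂ : Language A} {c : A} (h₁ : L₁.IsAperiodicAt c)
    (h₂ : L₂.IsAperiodicAt c) : (L₁ * L₂).IsAperiodicAt c := by
  obtain ⟨N₁, hN₁⟩ := h₁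
  obtain ⟨N₂, hN₂⟩ := h₂
  have left (u : List A) {i i' : ℕ} (hi : N₁ ≤ i) (hi' : N₁ ≤ i')
      (h : u ++ replicate i c ∈ L₁) : u ++ replicate i' c ∈ L₁ := by
    simpa using hN₁ u [] i i' hi hi' (by simpa using h)
  have right (w : List A) {j j' : ℕ} (hj : N₂ ≤ j) (hj' : N₂ ≤ j')
      (h : replicate j c ++ w ∈ L₂) : replicate j' c ++ w ∈ L₂ := by
    simpa using hN₂ [] w j j' hj hj' (by simpa using h)
  refine ⟨N₁ + N₂, fun u w m n hm hn hmem => ?_⟩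
  obtain ⟨x, hx, y, hy, hxy⟩ := mem_mul.1 hmem
  obtain ⟨t, rfl, rfl⟩ | ⟨i, j, rfl, rfl, rfl⟩ | ⟨t, rfl, rfl⟩ :=
    append_eq_append_replicate_append hxy
  · refine mem_mul.2 ⟨x, hx, _, hN₂ t w m n (by omega) (by omega) hy, by simp⟩
  · by_cases hi : i < N₁
    · rw [show n = i + (n - i) by omega]
      exact mem_mul_of_replicate hx (right w (by omega) (by omega) hy)
    by_cases hj : j < N₂
    · rw [show n = (n - j) + j by omega]
      exact mem_mul_of_replicate (left u (by omega) (by omega) hx) hy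
    · rw [show n = N₁ + (n - N₁) by omega]
      exact mem_mul_of_replicate (left u (by omega) le_rfl hx) (right w (by omega) (by omega) hy)
  · exact mem_mul.2 ⟨_, hN₁ u t m n (by omega) (by omega) hx, y, hy, by simp⟩

end Language

theorem StarFree.isAperiodicAt {A : Type*} {L : Language A} (h : StarFree L) (c : A) :
    L.IsAperiodicAt c := by
  induction h with
  | finite L hL => exact Language.isAperiodicAt_of_finite hL c
  | concat _ _ _ _ ih₁ ih₂ => exact ih₁.mul ih₂
  | union _ _ _ _ ih₁ ih₂ => exact ih₁.sup ih₂
  | inter _ _ _ _ ih₁ ih₂ => exact ih₁.inf ih₂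
  | compl _ _ ih => exact ih.compl

theorem List.prod_map_eq_prod_univ_pow_count {A M : Type*} [Fintype A] [BEq A] [LawfulBEq A]
    [CommMonoid M] (l : List A) (f : A → M) : (l.map f).prod = ∏ a, f a ^ l.count a := by
  classical
  obtain rfl : ‹BEq A› = instBEqOfDecidableEq := lawful_beq_subsingleton _ _
  rw [Finset.prod_list_map_count]
  exact Finset.prod_subset (Finset.subset_univ _) fun a _ ha => by
    rw [count_eq_zero.2 (by simpa using ha), pow_zero]

theorem List.length_eq_sum_count {A : Type*} [Fintype A] [BEq A] [LawfulBEq A] (l : List A) :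
    l.length = ∑ a, l.count a := by
  classical
  obtain rfl : ‹BEq A› = instBEqOfDecidableEq := lawful_beq_subsingleton _ _
  rw [← sum_toFinset_count_eq_length]
  exact Finset.sum_subset (Finset.subset_univ _) fun a _ ha => count_eq_zero.2 (by simpa using ha)

section Words

variable {G A : Type*} [Monoid G] (ev : A → G)

theorem evalWord_append (w w' : List A) :
    evalWord ev (w ++ w') = evalWord ev w * evalWord ev w' := by
  simp [evalWord]

theorem evalWord_singleton (a : A) : evalWord ev [a] = ev a := by
  simp [evalWord]

theorem evalWord_replicate (n : ℕ) (a : A) : evalWord ev (replicate n a) = ev a ^ n := by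
  simp [evalWord]

theorem evalWord_flatten (ws : List (List A)) :
    evalWord ev ws.flatten = (ws.map (evalWord ev)).prod := by
  simp only [evalWord, map_flatten, prod_flatten, map_map, Function.comp_def]
  rfl

theorem map_evalWord_eq_prod_pow_count [Fintype A] [BEq A] [LawfulBEq A] {M : Type*}
    [CommMonoid M] (φ : G →* M) (w : List A) :
    φ (evalWord ev w) = ∏ a, φ (ev a) ^ w.count a := by
  rw [evalWord, map_list_prod, map_map, List.prod_map_eq_prod_univ_pow_count]
  rfl

end Words

open PresentedGroup

theorem of_one_mul_of_three : (of 1 * of 3 : Gp) = of 5 :=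
  mk_eq_mk_of_mul_inv_mem (x := FreeGroup.of 1 * FreeGroup.of 3) (by simp [rels])

theorem of_four_mul_of_two : (of 4 * of 2 : Gp) = of 1 * of 0 ^ 2 * (of 1)⁻¹ := by
  have h : (of 1 * of 0 * of 0 * of 3 : Gp) = of 4 * of 2 * of 5 :=
    mk_eq_mk_of_mul_inv_mem
      (x := FreeGroup.of 1 * FreeGroup.of 0 * FreeGroup.of 0 * FreeGroup.of 3) (by simp [rels])
  rw [← of_one_mul_of_three] at h
  calc (of 4 * of 2 : Gp) = of 4 * of 2 * (of 1 * of 3) * (of 1 * of 3)⁻¹ := by group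
    _ = of 1 * of 0 * of 0 * of 3 * (of 1 * of 3)⁻¹ := by rw [h]
    _ = of 1 * of 0 ^ 2 * (of 1)⁻¹ := by rw [pow_two]; group

theorem ev6_gl (i : Fin 6) : ev6 (gl i) = of i := rfl

theorem evalWord_target (n : ℕ) :
    evalWord ev6 ([gl 1] ++ replicate n (gl 0) ++ [gl 3]) = of 1 * of 0 ^ n * of 3 := by
  simp only [evalWord_append, evalWord_singleton, evalWord_replicate, ev6_gl]

def rcWord (k : ℕ) : List (Fin 6 × Bool) :=
  (replicate k [gl 4, gl 2]).flatten ++ [gl 5]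

theorem length_rcWord (k : ℕ) : (rcWord k).length = 2 * k + 1 := by
  simp [rcWord, length_flatten, mul_comm]

theorem evalWord_rcWord (k : ℕ) : evalWord ev6 (rcWord k) = of 1 * of 0 ^ (2 * k) * of 3 := by
  have hrc : evalWord ev6 [gl 4, gl 2] = of 1 * of 0 ^ 2 * (of 1)⁻¹ := by
    simp [evalWord, ev6_gl, of_four_mul_of_two]
  rw [rcWord, evalWord_append, evalWord_flatten, map_replicate, prod_replicate, hrc, conj_pow,
    evalWord_singleton, ev6_gl, ← of_one_mul_of_three, pow_mul]
  group

theorem not_isGeodesic_even (k : ℕ) :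
    ¬ IsGeodesic ev6 ([gl 1] ++ replicate (2 * k) (gl 0) ++ [gl 3]) := by
  intro h
  have := h (rcWord k) (by rw [evalWord_rcWord, evalWord_target])
  simp [length_rcWord] at this

def weightHom (v : Fin 6 → ℤ) (h₁ : v 1 + v 0 + v 0 + v 3 = v 4 + v 2 + v 5)
    (h₂ : v 1 + v 3 = v 5) : Gp →* Multiplicative ℤ :=
  toGroup (f := fun i => Multiplicative.ofAdd (v i)) <| by
    rintro r (rfl | rfl) <;>
      simp only [map_mul, map_inv, FreeGroup.lift_apply_of, mul_inv_eq_one, ← ofAdd_add] <;>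
      congr 1

theorem sum_count_mul_weight_eq (v : Fin 6 → ℤ) (h₁ : v 1 + v 0 + v 0 + v 3 = v 4 + v 2 + v 5)
    (h₂ : v 1 + v 3 = v 5) {w : List (Fin 6 × Bool)} {n : ℕ}
    (hw : evalWord ev6 w = of 1 * of 0 ^ n * of 3) :
    ∑ l, (w.count l : ℤ) * (if l.2 then v l.1 else -v l.1) = v 1 + n * v 0 + v 3 := by
  have h := congrArg (fun g => (weightHom v h₁ h₂ g).toAdd) hw
  simp only [map_evalWord_eq_prod_pow_count, map_mul, map_pow, toAdd_prod, toAdd_pow,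
    weightHom, toGroup.of, toAdd_ofAdd, toAdd_mul, nsmul_eq_mul] at h
  rw [← h]
  refine Finset.sum_congr rfl fun ⟨i, b⟩ _ => ?_
  cases b <;> simp [ev6, toGroup.of]

def permHom : Gp →* Equiv.Perm (ZMod 3) :=
  toGroup (f := ![Equiv.neg _, Equiv.addLeft 1, 1, Equiv.addLeft 2, 1, 1]) <| by
    rintro r (rfl | rfl) <;>
      simp only [map_mul, map_inv, FreeGroup.lift_apply_of, mul_inv_eq_one] <;> decide

theorem permHom_evalWord_apply_zero {w : List (Fin 6 × Bool)}
    (hw : ∀ l ∈ w, l.1 ≠ 1 ∧ l.1 ≠ 3) :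
    permHom (evalWord ev6 w) 0 = 0 := by
  suffices
      evalWord ev6 w ∈ (MulAction.stabilizer (Equiv.Perm (ZMod 3)) (0 : ZMod 3)).comap permHom
    from this
  refine list_prod_mem (forall_mem_map.2 fun (⟨i, b⟩ : Fin 6 × Bool) hl => ?_)
  obtain ⟨h1, h3⟩ := hw _ hl
  simp only [Subgroup.mem_comap, MulAction.mem_stabilizer_iff, Equiv.Perm.smul_def]
  fin_cases i <;> cases b <;> simp_all [ev6, permHom, toGroup.of]

theorem permHom_target_apply_zero {n : ℕ} (hn : Odd n) :
    permHom (of 1 * of 0 ^ n * of 3) 0 = 2 := by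
  obtain ⟨k, rfl⟩ := hn
  have hneg : (Equiv.neg (ZMod 3)) ^ 2 = 1 := by decide
  simp only [map_mul, map_pow, permHom, toGroup.of, pow_succ, pow_mul, Matrix.cons_val_zero,
    Matrix.cons_val_one, Matrix.cons_val, hneg, one_pow, one_mul]
  decide

theorem isGeodesic_odd {n : ℕ} (hn : Odd n) :
    IsGeodesic ev6 ([gl 1] ++ replicate n (gl 0) ++ [gl 3]) := by
  intro w hw
  rw [evalWord_target] at hw
  rw [show ([gl 1] ++ replicate n (gl 0) ++ [gl 3]).length = n + 2 by simp]
  by_cases hbd : ∃ l ∈ w, l.1 = 1 ∨ l.1 = 3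
  · -- exponent sums of `a`, `b`, `c`, `d`, with `r = b a² b⁻¹ c⁻¹` and `s = b d`
    have ha := sum_count_mul_weight_eq ![1, 0, 0, 0, 2, 0] (by decide) (by decide) hw
    have hb := sum_count_mul_weight_eq ![0, 1, 0, 0, 0, 1] (by decide) (by decide) hw
    have hc := sum_count_mul_weight_eq ![0, 0, 1, 0, -1, 0] (by decide) (by decide) hw
    have hd := sum_count_mul_weight_eq ![0, 0, 0, 1, 0, 1] (by decide) (by decide) hw
    have hlen := congrArg (Nat.cast : ℕ → ℤ) (length_eq_sum_count w)
    obtain ⟨⟨i, s⟩, hl, hi⟩ := hbd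
    have hpos := count_pos_iff.2 hl
    simp only [Fintype.sum_prod_type, Fin.sum_univ_six, Fintype.sum_bool, Matrix.cons_val_zero,
      Matrix.cons_val_one, Matrix.cons_val, ↓reduceIte, Bool.false_eq_true, mul_one, mul_neg,
      mul_zero, neg_zero, add_zero, zero_add, neg_neg, Nat.cast_add] at ha hb hc hd hlen
    rcases hi with rfl | rfl <;> cases s <;> omega
  · push Not at hbd
    have h := permHom_evalWord_apply_zero hbd
    rw [hw, permHom_target_apply_zero hn] at h
    exact absurd h (by decide)

/-- The language of geodesics of the free group on `{a,b,c,d}` with respect to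
the generating set `{a,b,c,d,r,s}` (closed under inverses), where
`r = b a² b⁻¹ c⁻¹` and `s = bd`, is not star-free. -/
theorem stmt12 :
    ¬ StarFree {w : List (Fin 6 × Bool) | IsGeodesic ev6 w} := by
  intro h
  obtain ⟨N, hN⟩ := h.isAperiodicAt (gl 0)
  have hodd : IsGeodesic ev6 ([gl 1] ++ replicate (2 * N + 1) (gl 0) ++ [gl 3]) :=
    isGeodesic_odd ⟨N, rfl⟩
  exact not_isGeodesic_even (N + 1) (hN _ _ _ _ (by omega) (by omega) hodd)
end

section
/- If L1 and L2 are the languages of geodesics of groups G1 with generating set X1 and G2 with generating set X2 (with X1, X2 disjoint), and both L1 and L2 are star-free, then the language L of geodesics of the direct product G1 × G2 over the generating set X1 ∪ X2 is star-free. -/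
/-!
A word `w` over `X₁ ⊕ X₂` evaluates in `G₁ × G₂` to the pair of values of its projections to
`X₁` and `X₂`, and its length is the sum of theirs; since every pair of words arises as the
projections of some word, `w` is geodesic exactly when both projections are. The geodesic
language of the product is therefore the intersection of the preimages of `L₁` and `L₂` under
the two letter-erasing projections. Over a finite alphabet such preimages preserve
star-freeness: they commute with the Boolean operations and with concatenation, and the preimage
of a single word `b₁ ⋯ bₙ` is `N A₁ N ⋯ Aₙ N`, where `Aᵢ` is the finite set of letters
projecting to `bᵢ` and `N = (letters erased by the projection)*` is star-free.
-/

namespace Language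

variable {A B : Type*}

@[simp]
theorem mem_singleton {w u : List A} : w ∈ ({u} : Language A) ↔ w = u :=
  Iff.rfl

def letters (S : Set A) : Language A :=
  (fun a => [a]) '' S

@[simp]
theorem mem_letters {S : Set A} {w : List A} : w ∈ letters S ↔ ∃ a ∈ S, [a] = w :=
  Iff.rfl

def wordsOver (S : Set A) : Language A :=
  {w | ∀ a ∈ w, a ∈ S}

@[simp]
theorem mem_wordsOver {S : Set A} {w : List A} : w ∈ wordsOver S ↔ ∀ a ∈ w, a ∈ S :=
  Iff.rfl

def comapFilterMap (p : A → Option B) (L : Language B) : Language A :=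
  {w | w.filterMap p ∈ L}

@[simp]
theorem mem_comapFilterMap {p : A → Option B} {L : Language B} {w : List A} :
    w ∈ L.comapFilterMap p ↔ w.filterMap p ∈ L :=
  Iff.rfl

theorem comapFilterMap_mul (p : A → Option B) (L₁ L₂ : Language B) :
    (L₁ * L₂).comapFilterMap p = L₁.comapFilterMap p * L₂.comapFilterMap p := by
  ext w
  simp only [mem_comapFilterMap, mem_mul]
  constructor
  · rintro ⟨u, hu, v, hv, huv⟩
    obtain ⟨w₁, w₂, rfl, rfl, rfl⟩ := List.filterMap_eq_append_iff.mp huv.symm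
    exact ⟨w₁, hu, w₂, hv, rfl⟩
  · rintro ⟨w₁, hw₁, w₂, hw₂, rfl⟩
    exact ⟨_, hw₁, _, hw₂, List.filterMap_append.symm⟩

end Language

namespace StarFree

variable {A B : Type*}

theorem top : StarFree (⊤ : Language A) := by
  simpa using compl _ (finite (⊥ : Language A) Set.finite_empty)

theorem letters [Finite A] (S : Set A) : StarFree (Language.letters S) :=
  finite _ ((Set.toFinite S).image _)

theorem wordsOver [Finite A] (S : Set A) : StarFree (Language.wordsOver S) := by
  have hforbidden : Language.wordsOver S = (⊤ * Language.letters Sᶜ * ⊤)ᶜ := by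
    ext w
    constructor
    · intro hw hforbidden
      obtain ⟨_, hx, t, -, rfl⟩ := Language.mem_mul.mp hforbidden
      obtain ⟨s, -, _, ⟨a, ha, rfl⟩, rfl⟩ := Language.mem_mul.mp hx
      exact ha (hw a (by simp))
    · intro hw a ha
      by_contra haS
      obtain ⟨s, t, rfl⟩ := List.mem_iff_append.mp ha
      exact hw (Language.mem_mul.mpr ⟨s ++ [a],
        Language.mem_mul.mpr ⟨s, trivial, [a], ⟨a, haS, rfl⟩, rfl⟩, t, trivial, by simp⟩)
  rw [hforbidden]
  exact compl _ (concat _ _ (concat _ _ top (letters _)) top)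

theorem comapFilterMap_singleton [Finite A] (p : A → Option B) (u : List B) :
    StarFree (({u} : Language B).comapFilterMap p) := by
  induction u with
  | nil =>
    have herased : ({[]} : Language B).comapFilterMap p = Language.wordsOver {a | p a = none} :=
      Set.ext fun _ => List.filterMap_eq_nil_iff
    rw [herased]
    exact wordsOver _
  | cons b u ih =>
    have hsplit : ({b :: u} : Language B).comapFilterMap p =
        Language.wordsOver {a | p a = none} * Language.letters {a | p a = some b} *
          ({u} : Language B).comapFilterMap p := by
      ext w
      simp only [Language.mem_comapFilterMap, Language.mem_singleton,
        List.filterMap_eq_cons_iff, Language.mem_mul, Language.mem_wordsOver,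
        Language.mem_letters]
      constructor
      · rintro ⟨w₁, a, w₂, rfl, hw₁, ha, hw₂⟩
        exact ⟨w₁ ++ [a], ⟨w₁, hw₁, [a], ⟨a, ha, rfl⟩, rfl⟩, w₂, hw₂, by simp⟩
      · rintro ⟨_, ⟨w₁, hw₁, _, ⟨a, ha, rfl⟩, rfl⟩, w₂, hw₂, rfl⟩
        exact ⟨w₁, a, w₂, by simp, hw₁, ha, hw₂⟩
    rw [hsplit]
    exact concat _ _ (concat _ _ (wordsOver _) (letters _)) ih

theorem comapFilterMap [Finite A] (p : A → Option B) {L : Language B}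
    (hL : StarFree L) : StarFree (L.comapFilterMap p) := by
  induction hL with
  | finite L hfin =>
    induction L, hfin using Set.Finite.induction_on with
    | empty => exact finite _ Set.finite_empty
    | @insert u S _ _ ih => exact union _ _ (comapFilterMap_singleton p u) ih
  | concat L₁ L₂ _ _ ih₁ ih₂ =>
    rw [Language.comapFilterMap_mul]
    exact concat _ _ ih₁ ih₂
  | union L₁ L₂ _ _ ih₁ ih₂ => exact union _ _ ih₁ ih₂
  | inter L₁ L₂ _ _ ih₁ ih₂ => exact inter _ _ ih₁ ih₂
  | compl L _ ih => exact compl _ ih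

end StarFree

theorem List.length_filterMap_getLeft?_add_length_filterMap_getRight? {α β : Type*}
    (w : List (α ⊕ β)) :
    (w.filterMap Sum.getLeft?).length + (w.filterMap Sum.getRight?).length = w.length := by
  induction w with
  | nil => rfl
  | cons a t ih => cases a <;> simp [List.filterMap_cons] <;> omega

section Product

variable {G₁ G₂ X₁ X₂ : Type*} [Monoid G₁] [Monoid G₂] (e₁ : X₁ → G₁) (e₂ : X₂ → G₂)

def productGenerators : X₁ ⊕ X₂ → G₁ × G₂ :=
  Sum.elim (fun x => (e₁ x, 1)) (fun y => (1, e₂ y))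

theorem evalWord_productGenerators (w : List (X₁ ⊕ X₂)) :
    evalWord (productGenerators e₁ e₂) w =
      (evalWord e₁ (w.filterMap Sum.getLeft?), evalWord e₂ (w.filterMap Sum.getRight?)) := by
  induction w with
  | nil => rfl
  | cons a t ih =>
    simp only [evalWord, List.map_cons, List.prod_cons] at ih ⊢
    rw [ih]
    cases a <;> simp [productGenerators, List.filterMap_cons]

theorem evalWord_productGenerators_append_map (u : List X₁) (v : List X₂) :
    evalWord (productGenerators e₁ e₂) (u.map Sum.inl ++ v.map Sum.inr) =
      (evalWord e₁ u, evalWord e₂ v) := by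
  simp [evalWord_productGenerators, List.filterMap_append, List.filterMap_map,
    Function.comp_def]

theorem isGeodesic_productGenerators_iff (w : List (X₁ ⊕ X₂)) :
    IsGeodesic (productGenerators e₁ e₂) w ↔
      IsGeodesic e₁ (w.filterMap Sum.getLeft?) ∧ IsGeodesic e₂ (w.filterMap Sum.getRight?) := by
  have hlen := List.length_filterMap_getLeft?_add_length_filterMap_getRight? w
  constructor
  · intro hw
    constructor
    · intro u hu
      have hle := hw (u.map Sum.inl ++ (w.filterMap Sum.getRight?).map Sum.inr)
        (by rw [evalWord_productGenerators_append_map, evalWord_productGenerators, hu])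
      simp only [List.length_append, List.length_map] at hle
      omega
    · intro v hv
      have hle := hw ((w.filterMap Sum.getLeft?).map Sum.inl ++ v.map Sum.inr)
        (by rw [evalWord_productGenerators_append_map, evalWord_productGenerators, hv])
      simp only [List.length_append, List.length_map] at hle
      omega
  · rintro ⟨hw₁, hw₂⟩ w' hw'
    rw [evalWord_productGenerators, evalWord_productGenerators, Prod.ext_iff] at hw'
    have hle₁ := hw₁ _ hw'.1
    have hle₂ := hw₂ _ hw'.2
    have hlen' := List.length_filterMap_getLeft?_add_length_filterMap_getRight? w'
    omega

end Product

/-- If the geodesic languages of `(G₁,X₁)` and `(G₂,X₂)` are star-free, then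
so is the geodesic language of `G₁ × G₂` over `X₁ ∪ X₂`. -/
theorem stmt13 {G₁ G₂ X₁ X₂ : Type*} [Group G₁] [Group G₂]
    [Fintype X₁] [Fintype X₂] (e₁ : X₁ → G₁) (e₂ : X₂ → G₂)
    (h₁ : StarFree {w : List X₁ | IsGeodesic e₁ w})
    (h₂ : StarFree {w : List X₂ | IsGeodesic e₂ w}) :
    StarFree {w : List (X₁ ⊕ X₂) |
      IsGeodesic (Sum.elim (fun x => ((e₁ x, 1) : G₁ × G₂))
        (fun y => ((1, e₂ y) : G₁ × G₂))) w} := by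
  have hprojections : {w | IsGeodesic (productGenerators e₁ e₂) w} =
      Language.comapFilterMap Sum.getLeft? {w | IsGeodesic e₁ w} ⊓
        Language.comapFilterMap Sum.getRight? {w | IsGeodesic e₂ w} :=
    Set.ext (isGeodesic_productGenerators_iff e₁ e₂)
  change StarFree {w | IsGeodesic (productGenerators e₁ e₂) w}
  rw [hprojections]
  exact StarFree.inter _ _ (h₁.comapFilterMap _) (h₂.comapFilterMap _)
end
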